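/- Let 0 < y < 1 and let a > 0 with a ∉ [1−√y, 1+√y]; set φ(a) = a + ya/(a−1). Then m₃(φ(a)) + m₇(φ(a)) = ∫ x/(φ(a)−x)² dF_y(x) + ∫ x²/(φ(a)−x)³ dF_y(x) = a(a−1+y)(a−1)² / ((a−1)² − y)³. -/

import Mathlib

open MeasureTheory Real

/-- Density of the Marčenko–Pastur distribution with ratio parameter `c` (the absolutely
continuous part; it vanishes outside `[(1-√c)², (1+√c)²]`). -/
noncomputable def mpDensity (c x : ℝ) : ℝ :=
  if (1 - Real.sqrt c) ^ 2 ≤ x ∧ x ≤ (1 + Real.sqrt c) ^ 2 then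
    Real.sqrt ((x - (1 - Real.sqrt c) ^ 2) * ((1 + Real.sqrt c) ^ 2 - x)) /
      (2 * Real.pi * c * x)
  else 0

/-- The Marčenko–Pastur law with ratio parameter `c > 0`: an atom of mass `max (1 - 1/c) 0`
at `0` plus the absolutely continuous part with density `mpDensity c`.  For `c < 1` (in
particular for `c = y ∈ (0,1)`) the atom vanishes and this is the measure `F_y` with density
`(1/(2πxy))√((x-a_y)(b_y-x))` on `[a_y, b_y]`, `a_y = (1-√y)²`, `b_y = (1+√y)²`. -/
noncomputable def mpLaw (c : ℝ) : Measure ℝ :=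
  ENNReal.ofReal (1 - 1 / c) • Measure.dirac 0 +
    (volume : Measure ℝ).withDensity fun x => ENNReal.ofReal (mpDensity c x)

/-- The map `φ(a) = a + ya/(a-1)` sending a spike outside `[1-√y, 1+√y]` to the a.s. limit
of the corresponding extreme sample eigenvalue, outside the Marčenko–Pastur support. -/
noncomputable def phiSpike (y a : ℝ) : ℝ := a + y * a / (a - 1)

open Set

/-!
Since `x/(λ-x)² + x²/(λ-x)³ = λx/(λ-x)³`, the factor `x` cancels the `1/x` of the
Marčenko–Pastur density, and the sum is `λ/(2πy)` times the semicircle-type integral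
`∫ √(r² - (x-c)²)/(λ-x)³ dx` over `[c-r, c+r]`, with `c = 1 + y`, `r = 2√y`.
An explicit arcsine primitive evaluates it to `πr²/(2w³)`, where `w` is the square root of
`(λ-c)² - r²` carrying the sign of `λ - c`. For `λ = φ(a)` and `u = a - 1` one has
`λ - c = u + y/u` and `w = u - y/u`, which gives the closed form.
-/

-- A primitive of `√(r² - t²)/(d - t)³` on `[-r, r]` whenever `w² = d² - r²` and `w d > 0`;
-- taking the sign of `w` from `d` lets one formula serve both `d > r` and `d < -r`.
noncomputable def sqrtDivCubePrimitive (r d w t : ℝ) : ℝ :=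
  √(r ^ 2 - t ^ 2) * (d * t - r ^ 2) / (2 * w ^ 2 * (d - t) ^ 2)
    - r ^ 2 / (2 * w ^ 3) * arcsin ((r ^ 2 - d * t) / (r * (d - t)))

section
variable {r d w : ℝ}

lemma mul_sub_pos_of_sq_eq_sq_sub_sq {t : ℝ} (hw : w ^ 2 = d ^ 2 - r ^ 2) (hwd : 0 < w * d)
    (ht : t ∈ Icc (-r) r) : 0 < w * (d - t) := by
  obtain ⟨ht1, ht2⟩ := ht
  have hw0 : 0 < w ^ 2 := by
    have : w ≠ 0 := by rintro rfl; simp at hwd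
    positivity
  have hprod : 0 < (w * d - w * t) * (w * d + w * t) := by
    nlinarith [mul_nonneg (mul_nonneg (sub_nonneg.2 ht2) (neg_le_iff_add_nonneg.1 ht1)) hw0.le]
  nlinarith

lemma hasDerivAt_arcsin_sq_sub_mul_div {t : ℝ} (hr : 0 < r) (hw : w ^ 2 = d ^ 2 - r ^ 2)
    (ht : t ^ 2 < r ^ 2) (hwdt : 0 < w * (d - t)) :
    HasDerivAt (fun t => arcsin ((r ^ 2 - d * t) / (r * (d - t))))
      (-w / (√(r ^ 2 - t ^ 2) * (d - t))) t := by
  have hdt : d - t ≠ 0 := by rintro h; simp [h] at hwdt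
  have hs2 : √(r ^ 2 - t ^ 2) ^ 2 = r ^ 2 - t ^ 2 := sq_sqrt (by linarith)
  set u := (r ^ 2 - d * t) / (r * (d - t)) with hu_def
  have hu : HasDerivAt (fun t => (r ^ 2 - d * t) / (r * (d - t)))
      (-w ^ 2 / (r * (d - t) ^ 2)) t := by
    refine ((((hasDerivAt_id t).const_mul d).const_sub (r ^ 2)).div
      (((hasDerivAt_id t).const_sub d).const_mul r) (by simp [hdt, hr.ne'])).congr_deriv ?_
    simp only [id_eq]
    field_simp
    rw [hw]
    ring
  have hpos : 0 < w * √(r ^ 2 - t ^ 2) / (r * (d - t)) := by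
    rw [show w * √(r ^ 2 - t ^ 2) / (r * (d - t))
        = w * (d - t) * √(r ^ 2 - t ^ 2) / (r * (d - t) ^ 2) by field_simp]
    positivity
  have hsqrt : √(1 - u ^ 2) = w * √(r ^ 2 - t ^ 2) / (r * (d - t)) := by
    rw [← sqrt_sq hpos.le]
    congr 1
    rw [hu_def, div_pow, div_pow, mul_pow w, hs2, hw]
    field_simp
    ring
  have hu1 : |u| < 1 :=
    (sq_lt_one_iff_abs_lt_one u).1 (sub_pos.1 (sqrt_pos.1 (hsqrt ▸ hpos)))
  refine ((hasDerivAt_arcsin (abs_lt.1 hu1).1.ne' (abs_lt.1 hu1).2.ne).comp t hu).congr_deriv ?_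
  rw [hsqrt]
  field_simp

lemma hasDerivAt_sqrtDivCubePrimitive {t : ℝ} (hr : 0 < r) (hw : w ^ 2 = d ^ 2 - r ^ 2)
    (ht : t ^ 2 < r ^ 2) (hwdt : 0 < w * (d - t)) :
    HasDerivAt (sqrtDivCubePrimitive r d w) (√(r ^ 2 - t ^ 2) / (d - t) ^ 3) t := by
  have hdt : d - t ≠ 0 := by rintro h; simp [h] at hwdt
  have hw0 : w ≠ 0 := by rintro rfl; simp at hwdt
  have hq : r ^ 2 - t ^ 2 ≠ 0 := (sub_pos.2 ht).ne'
  have hs2 : √(r ^ 2 - t ^ 2) ^ 2 = r ^ 2 - t ^ 2 := sq_sqrt (by linarith)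
  have hs : HasDerivAt (fun t => √(r ^ 2 - t ^ 2)) (-(2 * t) / (2 * √(r ^ 2 - t ^ 2))) t := by
    simpa using ((hasDerivAt_pow 2 t).const_sub (r ^ 2)).sqrt hq
  have hnum := hs.mul (((hasDerivAt_id t).const_mul d).sub_const (r ^ 2))
  have hden := (((hasDerivAt_id t).const_sub d).pow 2).const_mul (2 * w ^ 2)
  have harc := hasDerivAt_arcsin_sq_sub_mul_div hr hw ht hwdt
  refine ((hnum.div hden (by simp [hw0, hdt])).sub
    (harc.const_mul (r ^ 2 / (2 * w ^ 3)))).congr_deriv ?_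
  have hs0 : √(r ^ 2 - t ^ 2) ≠ 0 := (sqrt_pos.2 (sub_pos.2 ht)).ne'
  simp only [id_eq, Pi.mul_apply, Pi.pow_apply]
  norm_num
  field_simp
  rw [hs2]
  linear_combination (2 * t ^ 2 - 2 * r ^ 2) * hw

lemma sqrtDivCubePrimitive_right (hr : 0 < r) (hdr : d - r ≠ 0) :
    sqrtDivCubePrimitive r d w r = π * r ^ 2 / (4 * w ^ 3) := by
  have hu : (r ^ 2 - d * r) / (r * (d - r)) = -1 := by
    field_simp
    ring
  simp only [sqrtDivCubePrimitive, sub_self, sqrt_zero, zero_mul, zero_div, hu, arcsin_neg_one]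
  ring

lemma sqrtDivCubePrimitive_left (hr : 0 < r) (hdr : d + r ≠ 0) :
    sqrtDivCubePrimitive r d w (-r) = -(π * r ^ 2 / (4 * w ^ 3)) := by
  have hu : (r ^ 2 - d * -r) / (r * (d - -r)) = 1 := by
    rw [sub_neg_eq_add]
    field_simp
    ring
  simp only [sqrtDivCubePrimitive, neg_sq, sub_self, sqrt_zero, zero_mul, zero_div, hu, arcsin_one]
  ring

theorem integral_sqrt_sq_sub_sq_div_cube (hr : 0 < r) (hw : w ^ 2 = d ^ 2 - r ^ 2)
    (hwd : 0 < w * d) :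
    ∫ t in (-r)..r, √(r ^ 2 - t ^ 2) / (d - t) ^ 3 = π * r ^ 2 / (2 * w ^ 3) := by
  have hpos : ∀ t ∈ Icc (-r) r, 0 < w * (d - t) := fun t ht =>
    mul_sub_pos_of_sq_eq_sq_sub_sq hw hwd ht
  have hne : ∀ t ∈ Icc (-r) r, d - t ≠ 0 := fun t ht h => by simpa [h] using hpos t ht
  have hrr : -r ≤ r := by linarith
  have hw0 : w ≠ 0 := by rintro rfl; simp at hwd
  rw [intervalIntegral.integral_eq_sub_of_hasDerivAt_of_le hrr (f := sqrtDivCubePrimitive r d w)]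
  · rw [sqrtDivCubePrimitive_right hr (hne r ⟨hrr, le_rfl⟩),
      sqrtDivCubePrimitive_left hr (by simpa using hne (-r) ⟨le_rfl, hrr⟩)]
    ring
  · unfold sqrtDivCubePrimitive
    fun_prop (disch := first | exact fun t ht => by simp [hne t ht, hr.ne', hw0] | simp [hw0])
  · intro t ht
    exact hasDerivAt_sqrtDivCubePrimitive hr hw (sq_lt_sq' ht.1 ht.2)
      (hpos t (Ioo_subset_Icc_self ht))
  · refine ContinuousOn.intervalIntegrable ?_
    rw [uIcc_of_le hrr]
    exact ContinuousOn.div (by fun_prop) (by fun_prop) fun t ht => pow_ne_zero 3 (hne t ht)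

end

theorem integral_sqrt_sq_sub_sq_div_cube_comp_sub_right {c r lam w : ℝ} (hr : 0 < r)
    (hw : w ^ 2 = (lam - c) ^ 2 - r ^ 2) (hwd : 0 < w * (lam - c)) :
    ∫ x in (c - r)..(c + r), √(r ^ 2 - (x - c) ^ 2) / (lam - x) ^ 3
      = π * r ^ 2 / (2 * w ^ 3) := by
  have hshift := intervalIntegral.integral_comp_sub_right
    (fun t => √(r ^ 2 - t ^ 2) / (lam - c - t) ^ 3) c (a := c - r) (b := c + r)
  simp only [sub_sub_cancel_left, add_sub_cancel_left, sub_sub_sub_cancel_right] at hshift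
  rw [hshift, integral_sqrt_sq_sub_sq_div_cube hr hw hwd]

lemma one_sub_sqrt_sq_le_one_add_sqrt_sq (c : ℝ) : (1 - √c) ^ 2 ≤ (1 + √c) ^ 2 := by
  nlinarith [sqrt_nonneg c]

lemma measurable_mpDensity (c : ℝ) : Measurable (mpDensity c) :=
  Measurable.ite measurableSet_Icc (by fun_prop) measurable_const

section
variable {c : ℝ}

lemma one_sub_sqrt_sq_pos (hc : c < 1) : 0 < (1 - √c) ^ 2 :=
  pow_pos (sub_pos.2 ((sqrt_lt' one_pos).2 (by simpa using hc))) 2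

lemma mpLaw_eq_withDensity (hc0 : 0 < c) (hc1 : c ≤ 1) :
    mpLaw c = volume.withDensity fun x => ENNReal.ofReal (mpDensity c x) := by
  have hatom : ENNReal.ofReal (1 - 1 / c) = 0 :=
    ENNReal.ofReal_eq_zero.2 (sub_nonpos.2 (one_le_one_div hc0 hc1))
  rw [mpLaw, hatom, zero_smul, zero_add]

lemma mpDensity_of_mem {x : ℝ} (hc : 0 ≤ c) (hx : x ∈ Icc ((1 - √c) ^ 2) ((1 + √c) ^ 2)) :
    mpDensity c x = √((2 * √c) ^ 2 - (x - (1 + c)) ^ 2) / (2 * π * c * x) := by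
  rw [mpDensity, if_pos (mem_Icc.1 hx)]
  congr 2
  linear_combination (2 * x - 2 - c - √c ^ 2) * sq_sqrt hc

lemma mpDensity_of_notMem {x : ℝ} (hx : x ∉ Icc ((1 - √c) ^ 2) ((1 + √c) ^ 2)) :
    mpDensity c x = 0 :=
  if_neg hx

lemma mpDensity_nonneg (hc : 0 ≤ c) (x : ℝ) : 0 ≤ mpDensity c x := by
  by_cases hx : x ∈ Icc ((1 - √c) ^ 2) ((1 + √c) ^ 2)
  · have : 0 ≤ x := (sq_nonneg _).trans hx.1
    rw [mpDensity_of_mem hc hx]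
    positivity
  · rw [mpDensity_of_notMem hx]

lemma continuousOn_mpDensity (hc0 : 0 < c) (hc1 : c < 1) :
    ContinuousOn (mpDensity c) (Icc ((1 - √c) ^ 2) ((1 + √c) ^ 2)) := by
  refine ContinuousOn.congr
    (f := fun x => √((2 * √c) ^ 2 - (x - (1 + c)) ^ 2) / (2 * π * c * x))
    (ContinuousOn.div (by fun_prop) (by fun_prop) fun x hx => ?_)
    fun x hx => mpDensity_of_mem hc0.le hx
  have : 0 < x := (one_sub_sqrt_sq_pos hc1).trans_le hx.1
  positivity

theorem integral_mpLaw (hc0 : 0 < c) (hc1 : c ≤ 1) (g : ℝ → ℝ) :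
    ∫ x, g x ∂mpLaw c = ∫ x in (1 - √c) ^ 2..(1 + √c) ^ 2, mpDensity c x * g x := by
  rw [mpLaw_eq_withDensity hc0 hc1,
    intervalIntegral.integral_of_le (one_sub_sqrt_sq_le_one_add_sqrt_sq c),
    ← integral_Icc_eq_integral_Ioc, ← integral_indicator measurableSet_Icc,
    integral_withDensity_eq_integral_toReal_smul (measurable_mpDensity c).ennreal_ofReal
      (ae_of_all _ fun _ => ENNReal.ofReal_lt_top)]
  congr 1
  funext x
  rw [ENNReal.toReal_ofReal (mpDensity_nonneg hc0.le x), smul_eq_mul]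
  by_cases hx : x ∈ Icc ((1 - √c) ^ 2) ((1 + √c) ^ 2)
  · rw [indicator_of_mem hx]
  · rw [indicator_of_notMem hx, mpDensity_of_notMem hx, zero_mul]

lemma intervalIntegrable_mpDensity_mul (hc0 : 0 < c) (hc1 : c < 1) {g : ℝ → ℝ}
    (hg : ContinuousOn g (Icc ((1 - √c) ^ 2) ((1 + √c) ^ 2))) :
    IntervalIntegrable (fun x => mpDensity c x * g x) volume ((1 - √c) ^ 2) ((1 + √c) ^ 2) :=
  ((continuousOn_mpDensity hc0 hc1).mul hg).intervalIntegrable_of_Icc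
    (one_sub_sqrt_sq_le_one_add_sqrt_sq c)

theorem integral_div_sq_add_integral_sq_div_cube_mpLaw {lam w : ℝ} (hc0 : 0 < c) (hc1 : c < 1)
    (hw : w ^ 2 = (lam - (1 + c)) ^ 2 - 4 * c) (hwd : 0 < w * (lam - (1 + c))) :
    (∫ x, x / (lam - x) ^ 2 ∂mpLaw c) + (∫ x, x ^ 2 / (lam - x) ^ 3 ∂mpLaw c)
      = lam / w ^ 3 := by
  have hr : 0 < 2 * √c := by positivity
  have hr2 : (2 * √c) ^ 2 = 4 * c := by rw [mul_pow, sq_sqrt hc0.le]; ring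
  have hα : (1 - √c) ^ 2 = 1 + c - 2 * √c := by linear_combination sq_sqrt hc0.le
  have hβ : (1 + √c) ^ 2 = 1 + c + 2 * √c := by linear_combination sq_sqrt hc0.le
  have hne : ∀ x ∈ Icc ((1 - √c) ^ 2) ((1 + √c) ^ 2), lam - x ≠ 0 := by
    intro x hx
    rw [hα, hβ] at hx
    have := mul_sub_pos_of_sq_eq_sq_sub_sq (t := x - (1 + c)) (hr2 ▸ hw) hwd
      ⟨by linarith [hx.1], by linarith [hx.2]⟩
    rw [sub_sub_sub_cancel_right] at this
    exact right_ne_zero_of_mul this.ne'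
  have hint₁ := intervalIntegrable_mpDensity_mul hc0 hc1 (g := fun x => x / (lam - x) ^ 2)
    (ContinuousOn.div (by fun_prop) (by fun_prop) fun x hx => pow_ne_zero 2 (hne x hx))
  have hint₂ := intervalIntegrable_mpDensity_mul hc0 hc1 (g := fun x => x ^ 2 / (lam - x) ^ 3)
    (ContinuousOn.div (by fun_prop) (by fun_prop) fun x hx => pow_ne_zero 3 (hne x hx))
  have hpt : EqOn
      (fun x => mpDensity c x * (x / (lam - x) ^ 2) + mpDensity c x * (x ^ 2 / (lam - x) ^ 3))
      (fun x => lam / (2 * π * c) * (√((2 * √c) ^ 2 - (x - (1 + c)) ^ 2) / (lam - x) ^ 3))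
      (uIcc ((1 - √c) ^ 2) ((1 + √c) ^ 2)) := by
    intro x hx
    rw [uIcc_of_le (one_sub_sqrt_sq_le_one_add_sqrt_sq c)] at hx
    have hx0 : 0 < x := (one_sub_sqrt_sq_pos hc1).trans_le hx.1
    have := hne x hx
    dsimp only
    rw [mpDensity_of_mem hc0.le hx]
    field_simp
    ring
  rw [integral_mpLaw hc0 hc1.le, integral_mpLaw hc0 hc1.le,
    ← intervalIntegral.integral_add hint₁ hint₂,
    intervalIntegral.integral_congr hpt, intervalIntegral.integral_const_mul, hα, hβ,
    integral_sqrt_sq_sub_sq_div_cube_comp_sub_right hr (hr2 ▸ hw) hwd, hr2]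
  field_simp
  ring

end

theorem mp_m3_add_m7_phi_general (y a : ℝ) (hy0 : 0 < y) (hy1 : y < 1)
    (hout : a ∉ Set.Icc (1 - Real.sqrt y) (1 + Real.sqrt y)) :
    (∫ x, x / (phiSpike y a - x) ^ 2 ∂mpLaw y) +
        (∫ x, x ^ 2 / (phiSpike y a - x) ^ 3 ∂mpLaw y) =
      a * (a - 1 + y) * (a - 1) ^ 2 / ((a - 1) ^ 2 - y) ^ 3 := by
  have hgap : y < (a - 1) ^ 2 := by
    simp only [mem_Icc, not_and_or, not_le] at hout
    rcases hout with h | h <;> nlinarith [sqrt_nonneg y, sq_sqrt hy0.le]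
  have ha1 : a - 1 ≠ 0 := by rintro h; rw [h] at hgap; linarith
  have hphi : phiSpike y a - (1 + y) = (a - 1) + y / (a - 1) := by
    rw [phiSpike]; field_simp; ring
  rw [integral_div_sq_add_integral_sq_div_cube_mpLaw (w := (a - 1) - y / (a - 1)) hy0 hy1]
  · rw [phiSpike]; field_simp
  · rw [hphi]; field_simp; ring
  · rw [hphi, show ((a - 1) - y / (a - 1)) * ((a - 1) + y / (a - 1))
      = ((a - 1) ^ 2 - y) * ((a - 1) ^ 2 + y) / (a - 1) ^ 2 by field_simp]
    exact div_pos (mul_pos (sub_pos.2 hgap) (by positivity)) (by positivity)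

/-- `m₃(φ(a)) + m₇(φ(a)) = ∫ x/(φ(a)−x)² dF_y + ∫ x²/(φ(a)−x)³ dF_y
      = a(a−1+y)(a−1)² / ((a−1)²−y)³`. -/
theorem mp_m3_add_m7_phi (y a : ℝ) (hy0 : 0 < y) (hy1 : y < 1) (ha : 0 < a)
    (hout : a ∉ Set.Icc (1 - Real.sqrt y) (1 + Real.sqrt y)) :
    (∫ x, x / (phiSpike y a - x) ^ 2 ∂mpLaw y) +
        (∫ x, x ^ 2 / (phiSpike y a - x) ^ 3 ∂mpLaw y) =
      a * (a - 1 + y) * (a - 1) ^ 2 / ((a - 1) ^ 2 - y) ^ 3 :=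
  mp_m3_add_m7_phi_general y a hy0 hy1 hout
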